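/- Corollary 2 (asymptotic bounds for the posterior FDR): Assume conditions (C) and (A1), assume d^t ≠ (0,…,0), and assume that for each i with d_i^t = 1 there is a constant H_i > 0 such that (1/n)·log(1 − v_{in}) → −H_i as n → ∞. Let t = #{i : d_i^t = 1} and define FDR_n = (Σ_{i=1}^m d̂_{n,i}(1 − v_{in})) / max(Σ_{i=1}^m d̂_{n,i}, 1), where d̂_n is the non-marginal decision. Then for every ε > 0 there exists n₀ such that for all n ≥ n₀: e^{−nε} · (Σ_{i : d_i^t = 1} e^{−n H_i}) / t ≤ FDR_n ≤ e^{nε} · (Σ_{i : d_i^t = 1} e^{−n H_i}) / t. -/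

import Mathlib

/-!
Once `β n` stays a fixed distance `κ` away from `0` and `1`, the score of a configuration `d`
with `k` rejections, `c` of them correct within their groups, differs from the score of the truth
(with `t` rejections) by `(c - t) - (k - t) β n + o(1) = (c - t)(1 - β n) + (c - k) β n + o(1)`,
which is at most `-κ + o(1)` whenever `d ≠ dᵗ`. Hence the non-marginal decision eventually equals
`dᵗ`, and the posterior FDR becomes the average of `1 - v n i` over the true alternatives, each of
which lies between `exp (-n (H i ± ε))` by the assumption on `log (1 - v n i) / n`.
-/

open Filter Finset

section NonMarginal

variable {ι : Type*} [Fintype ι]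

def rejections (d : ι → Bool) : Finset ι := univ.filter (fun i => d i = true)

def score (w : ι → (ι → Bool) → ℝ) (β : ℝ) (d : ι → Bool) : ℝ :=
  ∑ i, if d i then w i d - β else 0

noncomputable def posteriorFDR (v : ι → ℝ) (d : ι → Bool) : ℝ :=
  (∑ i, if d i then 1 - v i else 0) / max (∑ i, if d i then (1 : ℝ) else 0) 1

/-- The rejections of `d` that are correct on the whole group `G i`, i.e. with `d ∈ D_i`. -/
def correctRejections (G : ι → Finset ι) (dt d : ι → Bool) : Finset ι :=
  univ.filter (fun i => d i = true ∧ ∀ j ∈ G i, d j = dt j)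

theorem rejections_injective : Function.Injective (rejections : (ι → Bool) → Finset ι) := by
  intro d d' h
  funext i
  simp only [rejections, Finset.ext_iff, mem_filter, mem_univ, true_and] at h
  exact Bool.eq_iff_iff.2 (h i)

theorem score_eq_sum_sub (w : ι → (ι → Bool) → ℝ) (β : ℝ) (d : ι → Bool) :
    score w β d = ∑ i, (if d i then w i d else 0) - #(rejections d) * β := by
  have hsplit : ∀ i, (if d i then w i d - β else 0) =
      (if d i then w i d else 0) - if d i then β else 0 := fun i => by split_ifs <;> ring
  have hβsum : ∑ i, (if d i then β else 0) = #(rejections d) * β := by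
    rw [← sum_filter, sum_const, nsmul_eq_mul, rejections]
  rw [score, sum_congr rfl fun i _ => hsplit i, sum_sub_distrib, hβsum]

section Consistency

variable {G : ι → Finset ι} {dt : ι → Bool}

theorem correctRejections_subset_rejections (d : ι → Bool) :
    correctRejections G dt d ⊆ rejections d := by
  intro i hi
  simp only [correctRejections, rejections, mem_filter] at hi ⊢
  exact ⟨hi.1, hi.2.1⟩

theorem correctRejections_subset_rejections_true (hG : ∀ i, i ∈ G i) (d : ι → Bool) :
    correctRejections G dt d ⊆ rejections dt := by
  intro i hi
  simp only [correctRejections, rejections, mem_filter, mem_univ, true_and] at hi ⊢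
  exact hi.2 i (hG i) ▸ hi.1

theorem correctRejections_self : correctRejections G dt dt = rejections dt := by
  simp [correctRejections, rejections]

theorem correctRejections_ssubset_or (hG : ∀ i, i ∈ G i) {d : ι → Bool} (hd : d ≠ dt) :
    correctRejections G dt d ⊂ rejections d ∨ correctRejections G dt d ⊂ rejections dt := by
  by_contra! h
  have hd' : rejections d = rejections dt :=
    ((correctRejections_subset_rejections d).eq_of_not_ssubset h.1).symm.trans
      ((correctRejections_subset_rejections_true hG d).eq_of_not_ssubset h.2)
  exact hd (rejections_injective hd')

theorem sub_sub_mul_le_neg_min {c k t : ℕ} (hck : c ≤ k) (hct : c ≤ t) (hlt : c < k ∨ c < t)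
    {β : ℝ} (hβ₀ : 0 ≤ β) (hβ₁ : β ≤ 1) :
    ((c : ℝ) - t) - ((k : ℝ) - t) * β ≤ -min β (1 - β) := by
  have hck' : (c : ℝ) ≤ k := by exact_mod_cast hck
  have hct' : (c : ℝ) ≤ t := by exact_mod_cast hct
  -- the left side is `(c - t) (1 - β) + (c - k) β`, a sum of two nonpositive terms
  rcases hlt with hlt | hlt
  · have : (c : ℝ) + 1 ≤ k := by exact_mod_cast hlt
    nlinarith [mul_nonneg (sub_nonneg.2 hct') (sub_nonneg.2 hβ₁), min_le_left β (1 - β)]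
  · have : (c : ℝ) + 1 ≤ t := by exact_mod_cast hlt
    nlinarith [mul_nonneg (sub_nonneg.2 hck') hβ₀, min_le_right β (1 - β)]

variable {α : Type*} {l : Filter α} {w : α → ι → (ι → Bool) → ℝ}

theorem tendsto_sum_rejected_weight
    (hC1 : ∀ i d, (∀ j ∈ G i, d j = dt j) → Tendsto (fun n => w n i d) l (nhds 1))
    (hC0 : ∀ i d, (¬ ∀ j ∈ G i, d j = dt j) → Tendsto (fun n => w n i d) l (nhds 0))
    (d : ι → Bool) :
    Tendsto (fun n => ∑ i, if d i then w n i d else 0) l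
      (nhds (#(correctRejections G dt d) : ℝ)) := by
  rw [correctRejections, ← sum_boole]
  refine tendsto_finsetSum _ fun i _ => ?_
  by_cases hdi : d i = true
  · simp only [hdi, if_true, true_and]
    by_cases hi : ∀ j ∈ G i, d j = dt j
    · rw [if_pos hi]
      exact hC1 i d hi
    · rw [if_neg hi]
      exact hC0 i d hi
  · simpa [hdi] using tendsto_const_nhds

variable {β : α → ℝ} {κ : ℝ}

theorem eventually_score_lt_score_true (hG : ∀ i, i ∈ G i)
    (hC1 : ∀ i d, (∀ j ∈ G i, d j = dt j) → Tendsto (fun n => w n i d) l (nhds 1))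
    (hC0 : ∀ i d, (¬ ∀ j ∈ G i, d j = dt j) → Tendsto (fun n => w n i d) l (nhds 0))
    (hκ : 0 < κ) (hβ : ∀ᶠ n in l, κ ≤ β n ∧ κ ≤ 1 - β n) {d : ι → Bool} (hd : d ≠ dt) :
    ∀ᶠ n in l, score (w n) (β n) d < score (w n) (β n) dt := by
  have hlim := tendsto_sub_nhds_zero_iff.2
    ((tendsto_sum_rejected_weight hC1 hC0 d).sub (tendsto_sum_rejected_weight hC1 hC0 dt))
  filter_upwards [hlim.eventually (eventually_lt_nhds hκ), hβ] with n hsmall ⟨hβlo, hβhi⟩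
  have hgap := sub_sub_mul_le_neg_min (card_le_card (correctRejections_subset_rejections d))
    (card_le_card (correctRejections_subset_rejections_true hG d))
    ((correctRejections_ssubset_or hG hd).imp card_lt_card card_lt_card)
    (hκ.le.trans hβlo) (by linarith)
  have hκmin : κ ≤ min (β n) (1 - β n) := le_min hβlo hβhi
  rw [correctRejections_self] at hsmall
  rw [score_eq_sum_sub, score_eq_sum_sub]
  linarith

theorem eventually_eq_of_forall_score_le (hG : ∀ i, i ∈ G i)
    (hC1 : ∀ i d, (∀ j ∈ G i, d j = dt j) → Tendsto (fun n => w n i d) l (nhds 1))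
    (hC0 : ∀ i d, (¬ ∀ j ∈ G i, d j = dt j) → Tendsto (fun n => w n i d) l (nhds 0))
    (hκ : 0 < κ) (hβ : ∀ᶠ n in l, κ ≤ β n ∧ κ ≤ 1 - β n) {dhat : α → ι → Bool}
    (hdhat : ∀ n d, score (w n) (β n) d ≤ score (w n) (β n) (dhat n)) :
    ∀ᶠ n in l, dhat n = dt := by
  have hlt : ∀ᶠ n in l, ∀ d, d ≠ dt → score (w n) (β n) d < score (w n) (β n) dt :=
    eventually_all.2 fun d => eventually_imp_distrib_left.2 fun hd =>
      eventually_score_lt_score_true hG hC1 hC0 hκ hβ hd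
  filter_upwards [hlt] with n hn
  by_contra hne
  exact (hdhat n dt).not_gt (hn _ hne)

end Consistency

theorem posteriorFDR_eq {v : ι → ℝ} {d : ι → Bool} (hd : (rejections d).Nonempty) :
    posteriorFDR v d = (∑ i ∈ rejections d, (1 - v i)) / #(rejections d) := by
  have hcard : (1 : ℝ) ≤ #(rejections d) := by exact_mod_cast hd.card_pos
  rw [posteriorFDR, sum_boole, ← sum_filter]
  congr 1
  exact max_eq_left hcard

theorem posteriorFDR_bounds {v e : ι → ℝ} {d : ι → Bool} (hd : (rejections d).Nonempty)
    {a b : ℝ} (h : ∀ i ∈ rejections d, a * e i ≤ 1 - v i ∧ 1 - v i ≤ b * e i) :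
    a * (∑ i ∈ rejections d, e i) / #(rejections d) ≤ posteriorFDR v d ∧
      posteriorFDR v d ≤ b * (∑ i ∈ rejections d, e i) / #(rejections d) := by
  rw [posteriorFDR_eq hd, mul_sum, mul_sum]
  constructor <;> gcongr with i hi
  exacts [(h i hi).1, (h i hi).2]

end NonMarginal

theorem exists_pos_eventually_le_and_le_one_sub {α : Type*} {l : Filter α} {β : α → ℝ}
    (hβ : ∀ n, β n ∈ Set.Icc (0 : ℝ) 1) (hlo : 0 < liminf β l) (hhi : limsup β l < 1) :
    ∃ κ > 0, ∀ᶠ n in l, κ ≤ β n ∧ κ ≤ 1 - β n := by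
  obtain ⟨κ, hκ, hκmin⟩ := exists_between (lt_min hlo (sub_pos.2 hhi))
  have hκlo : κ < liminf β l := hκmin.trans_le (min_le_left _ _)
  have hκhi : limsup β l < 1 - κ := by linarith [min_le_right (liminf β l) (1 - limsup β l)]
  refine ⟨κ, hκ, ?_⟩
  filter_upwards [eventually_lt_of_lt_liminf hκlo (isBoundedUnder_of ⟨0, fun n => (hβ n).1⟩),
    eventually_lt_of_limsup_lt hκhi (isBoundedUnder_of ⟨1, fun n => (hβ n).2⟩)]
    with n hn hn' using ⟨hn.le, by linarith⟩

theorem eventually_exp_bounds_of_tendsto_log_div {x : ℕ → ℝ} {H ε : ℝ} (hx : ∀ n, 0 < x n)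
    (h : Tendsto (fun n : ℕ => Real.log (x n) / n) atTop (nhds (-H))) (hε : 0 < ε) :
    ∀ᶠ n : ℕ in atTop, Real.exp (-(n : ℝ) * ε) * Real.exp (-(n : ℝ) * H) ≤ x n ∧
      x n ≤ Real.exp ((n : ℝ) * ε) * Real.exp (-(n : ℝ) * H) := by
  filter_upwards [h.eventually (Ioo_mem_nhds (show -H - ε < -H by linarith)
    (show -H < -H + ε by linarith)), eventually_gt_atTop 0] with n ⟨hlo, hhi⟩ hn
  have hn' : (0 : ℝ) < n := Nat.cast_pos.2 hn
  rw [lt_div_iff₀ hn'] at hlo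
  rw [div_lt_iff₀ hn'] at hhi
  rw [← Real.exp_add, ← Real.exp_add, ← Real.exp_log (hx n)]
  constructor <;> apply Real.exp_le_exp.2 <;> linarith

theorem FDR_asymptotic_bounds_general
    (m : ℕ)
    (dt : Fin m → Bool)
    (G : Fin m → Finset (Fin m)) (hG : ∀ i, i ∈ G i)
    (w : ℕ → Fin m → (Fin m → Bool) → ℝ)
    (v : ℕ → Fin m → ℝ) (hv : ∀ n i, v n i ∈ Set.Ioo (0:ℝ) 1)
    (β : ℕ → ℝ) (hβ : ∀ n, β n ∈ Set.Ioo (0:ℝ) 1)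
    (hA1₁ : 0 < Filter.liminf β Filter.atTop)
    (hA1₂ : Filter.limsup β Filter.atTop < 1)
    (hC1 : ∀ (i : Fin m) (d : Fin m → Bool),
      (∀ j ∈ G i, d j = dt j) → Tendsto (fun n => w n i d) atTop (nhds 1))
    (hC0 : ∀ (i : Fin m) (d : Fin m → Bool),
      (¬ ∀ j ∈ G i, d j = dt j) → Tendsto (fun n => w n i d) atTop (nhds 0))
    (hdt : (Finset.univ.filter (fun i => dt i = true)).Nonempty)
    (H : Fin m → ℝ)
    (hH : ∀ i, dt i = true → 0 < H i ∧
      Tendsto (fun n : ℕ => Real.log (1 - v n i) / n) atTop (nhds (-(H i))))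
    (dhat : ℕ → Fin m → Bool)
    (hdhat : ∀ n (d : Fin m → Bool),
      (∑ i, if d i then w n i d - β n else 0) ≤
        (∑ i, if dhat n i then w n i (dhat n) - β n else 0)) :
    ∀ ε > (0:ℝ), ∃ n₀ : ℕ, ∀ n ≥ n₀,
      Real.exp (-(n:ℝ) * ε) *
          (∑ i ∈ Finset.univ.filter (fun i => dt i = true), Real.exp (-(n:ℝ) * H i)) /
          ((Finset.univ.filter (fun i => dt i = true)).card : ℝ)
        ≤ (∑ i, if dhat n i then 1 - v n i else 0) /
            max (∑ i, if dhat n i then (1:ℝ) else 0) 1 ∧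
      (∑ i, if dhat n i then 1 - v n i else 0) /
            max (∑ i, if dhat n i then (1:ℝ) else 0) 1
        ≤ Real.exp ((n:ℝ) * ε) *
            (∑ i ∈ Finset.univ.filter (fun i => dt i = true), Real.exp (-(n:ℝ) * H i)) /
            ((Finset.univ.filter (fun i => dt i = true)).card : ℝ) := by
  intro ε hε
  obtain ⟨κ, hκ, hβκ⟩ := exists_pos_eventually_le_and_le_one_sub
    (fun n => Set.Ioo_subset_Icc_self (hβ n)) hA1₁ hA1₂
  have hconsistent : ∀ᶠ n in atTop, dhat n = dt :=
    eventually_eq_of_forall_score_le hG hC1 hC0 hκ hβκ hdhat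
  have hbounds : ∀ᶠ n : ℕ in atTop, ∀ i ∈ rejections dt,
      Real.exp (-(n : ℝ) * ε) * Real.exp (-(n : ℝ) * H i) ≤ 1 - v n i ∧
        1 - v n i ≤ Real.exp ((n : ℝ) * ε) * Real.exp (-(n : ℝ) * H i) :=
    (eventually_all_finset _).2 fun i hi =>
      eventually_exp_bounds_of_tendsto_log_div (fun n => sub_pos.2 (hv n i).2)
        (hH i (mem_filter.1 hi).2).2 hε
  obtain ⟨n₀, hn₀⟩ := eventually_atTop.1 (hconsistent.and hbounds)
  refine ⟨n₀, fun n hn => ?_⟩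
  obtain ⟨hdn, hbn⟩ := hn₀ n hn
  rw [hdn]
  exact posteriorFDR_bounds hdt hbn

/-- Corollary 2 (asymptotic bounds for the posterior FDR). -/
theorem FDR_asymptotic_bounds
    (m : ℕ) (hm : 1 ≤ m)
    (dt : Fin m → Bool)
    (G : Fin m → Finset (Fin m)) (hG : ∀ i, i ∈ G i)
    (w : ℕ → Fin m → (Fin m → Bool) → ℝ)
    (hw : ∀ n i d, w n i d ∈ Set.Ioo (0:ℝ) 1)
    (v : ℕ → Fin m → ℝ) (hv : ∀ n i, v n i ∈ Set.Ioo (0:ℝ) 1)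
    (β : ℕ → ℝ) (hβ : ∀ n, β n ∈ Set.Ioo (0:ℝ) 1)
    (hA1₁ : 0 < Filter.liminf β Filter.atTop)
    (hA1₂ : Filter.limsup β Filter.atTop < 1)
    (hC1 : ∀ (i : Fin m) (d : Fin m → Bool),
      (∀ j ∈ G i, d j = dt j) → Tendsto (fun n => w n i d) atTop (nhds 1))
    (hC0 : ∀ (i : Fin m) (d : Fin m → Bool),
      (¬ ∀ j ∈ G i, d j = dt j) → Tendsto (fun n => w n i d) atTop (nhds 0))
    (hdt : (Finset.univ.filter (fun i => dt i = true)).Nonempty)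
    (H : Fin m → ℝ)
    (hH : ∀ i, dt i = true → 0 < H i ∧
      Tendsto (fun n : ℕ => Real.log (1 - v n i) / n) atTop (nhds (-(H i))))
    (dhat : ℕ → Fin m → Bool)
    (hdhat : ∀ n (d : Fin m → Bool),
      (∑ i, if d i then w n i d - β n else 0) ≤
        (∑ i, if dhat n i then w n i (dhat n) - β n else 0)) :
    ∀ ε > (0:ℝ), ∃ n₀ : ℕ, ∀ n ≥ n₀,
      Real.exp (-(n:ℝ) * ε) *
          (∑ i ∈ Finset.univ.filter (fun i => dt i = true), Real.exp (-(n:ℝ) * H i)) /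
          ((Finset.univ.filter (fun i => dt i = true)).card : ℝ)
        ≤ (∑ i, if dhat n i then 1 - v n i else 0) /
            max (∑ i, if dhat n i then (1:ℝ) else 0) 1 ∧
      (∑ i, if dhat n i then 1 - v n i else 0) /
            max (∑ i, if dhat n i then (1:ℝ) else 0) 1
        ≤ Real.exp ((n:ℝ) * ε) *
            (∑ i ∈ Finset.univ.filter (fun i => dt i = true), Real.exp (-(n:ℝ) * H i)) /
            ((Finset.univ.filter (fun i => dt i = true)).card : ℝ) :=
  FDR_asymptotic_bounds_general m dt G hG w v hv β hβ hA1₁ hA1₂ hC1 hC0 hdt H hH dhat hdhat
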